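/- arXiv:2405.13875 — 3 statements merged into one kernel-verified Lean document; each statement's English description precedes it below -/
import Mathlib

section
/- If v is a vertex of degree 1 in a connected undirected graph G with at least 2 vertices, then v belongs to every monitoring edge-geodetic set of G. -/
open SimpleGraph

/-- A pair `{x, y}` monitors the edge `e` if `e` lies on every shortest path
between `x` and `y` in `G`. -/
def Monitors {V : Type*} (G : SimpleGraph V) (x y : V) (e : Sym2 V) : Prop :=
  ∀ p : G.Walk x y, p.IsPath → p.length = G.dist x y → e ∈ p.edges

/-- `M` is a monitoring edge-geodetic set of `G` if every edge of `G` is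
monitored by some pair of vertices of `M`. -/
def IsMEGSet {V : Type*} (G : SimpleGraph V) (M : Set V) : Prop :=
  ∀ e ∈ G.edgeSet, ∃ x ∈ M, ∃ y ∈ M, Monitors G x y e

namespace SimpleGraph.Walk

variable {V : Type*} {G : SimpleGraph V}

/-- An inner vertex of a trail is entered and left along distinct edges, so it has two distinct
neighbours. -/
theorem IsTrail.eq_or_eq_of_subsingleton_neighborSet {x y v : V} {p : G.Walk x y}
    (hp : p.IsTrail) (hv : v ∈ p.support) (hN : (G.neighborSet v).Subsingleton) :
    v = x ∨ v = y := by
  classical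
  by_contra! hxy
  set pre := (p.takeUntil v hv).reverse
  set post := p.dropUntil v hv
  have hpre : ¬pre.Nil := not_nil_of_ne hxy.1
  have hpost : ¬post.Nil := not_nil_of_ne hxy.2
  have hsnd : pre.snd = post.snd := hN (pre.adj_snd hpre) (post.adj_snd hpost)
  have hmem : s(v, pre.snd) ∈ (p.takeUntil v hv).edges := by
    simpa [pre, edges_reverse] using pre.mk_start_snd_mem_edges hpre
  exact hp.disjoint_edges_takeUntil_dropUntil hv hmem (hsnd ▸ post.mk_start_snd_mem_edges hpost)

end SimpleGraph.Walk

theorem degree_one_mem_megSet_general {V : Type*} [Fintype V] (G : SimpleGraph V)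
    [DecidableRel G.Adj] (hG : G.Connected)
    (v : V) (hv : G.degree v = 1) (M : Set V) (hM : IsMEGSet G M) :
    v ∈ M := by
  obtain ⟨u, hvu, hu⟩ := degree_eq_one_iff_existsUnique_adj.mp hv
  obtain ⟨x, hx, y, hy, hmon⟩ := hM s(v, u) hvu
  obtain ⟨p, hp, hlen⟩ := hG.exists_path_of_dist x y
  have hleaf : (G.neighborSet v).Subsingleton := fun w hw w' hw' =>
    (hu w hw).trans (hu w' hw').symm
  rcases hp.isTrail.eq_or_eq_of_subsingleton_neighborSet
      (p.fst_mem_support_of_mem_edges (hmon p hp hlen)) hleaf with rfl | rfl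
  · exact hx
  · exact hy

theorem degree_one_mem_megSet {V : Type*} [Fintype V] (G : SimpleGraph V)
    [DecidableRel G.Adj] (hG : G.Connected) (hn : 2 ≤ Fintype.card V)
    (v : V) (hv : G.degree v = 1) (M : Set V) (hM : IsMEGSet G M) :
    v ∈ M :=
  degree_one_mem_megSet_general G hG v hv M hM
end

section
/- Let u be a vertex of degree 1 in a connected graph G with at least 3 vertices, and let v be the unique neighbor of u. If M is a MEG-set of G, then M \ {v} is also a MEG-set of G. -/
open SimpleGraph

/-!
If `v` is the only neighbour of the leaf `u`, every geodesic leaving `u` passes through `v`, so a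
pair `{v, y}` monitors nothing that `{u, y}` does not monitor; and since a geodesic never passes
through a leaf, `u` itself lies in every MEG-set. The only pair this substitution cannot handle
is `{v, u}`, which monitors just the edge `uv`; that edge is monitored by `u` together with any
third vertex of `M`, and such a vertex exists because some edge `vw` with `w ≠ u` must be
monitored.
-/

section

variable {V : Type*} {G : SimpleGraph V} {u v w x y z : V} {e : Sym2 V} {M : Set V}

lemma SimpleGraph.Walk.IsPath.leaf_eq_start_or_end {p : G.Walk x y} (hp : p.IsPath)
    (hleaf : ∀ w, G.Adj u w → w = v) (hu : u ∈ p.support) : x = u ∨ y = u := by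
  obtain ⟨i, rfl, hi⟩ := mem_support_iff_exists_getVert.mp hu
  by_contra! hxy
  have hi₀ : i ≠ 0 := by rintro rfl; simp at hxy
  have hi₁ : i ≠ p.length := by rintro rfl; simp at hxy
  have hprev : p.getVert (i - 1) = v := by
    have hadj := p.adj_getVert_succ (i := i - 1) (by omega)
    rw [Nat.sub_add_cancel (by omega)] at hadj
    exact hleaf _ hadj.symm
  have hnext : p.getVert (i + 1) = v := hleaf _ (p.adj_getVert_succ (by omega))
  have := hp.getVert_injOn (by simp only [Set.mem_ofPred_eq]; omega)
    (by simp only [Set.mem_ofPred_eq]; omega) (hprev.trans hnext.symm)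
  omega

namespace Monitors

lemma symm (h : Monitors G x y e) : Monitors G y x e := by
  intro p hp hlen
  simpa using h p.reverse hp.reverse (by rw [Walk.length_reverse, hlen, dist_comm])

lemma not_self : ¬Monitors G x x e := fun h ↦ by
  simpa using h Walk.nil Walk.IsPath.nil (by simp)

lemma eq_of_adj (h : Monitors G x y e) (hxy : G.Adj x y) : e = s(x, y) := by
  simpa using h (Walk.cons hxy Walk.nil) (by simp [hxy.ne])
    (by simp [dist_eq_one_iff_adj.mpr hxy])

lemma eq_or_eq_of_leaf_edge (h : Monitors G x y s(u, v)) (hxy : G.Reachable x y)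
    (hleaf : ∀ w, G.Adj u w → w = v) : x = u ∨ y = u := by
  obtain ⟨p, hp, hlen⟩ := hxy.exists_path_of_dist
  exact hp.leaf_eq_start_or_end hleaf (p.fst_mem_support_of_mem_edges (h p hp hlen))

/-- Geodesics from the leaf `u` are the geodesics from `v` preceded by the edge `uv`. -/
lemma of_leaf_neighbor (h : Monitors G v y e) (huv : G.Adj u v)
    (hleaf : ∀ w, G.Adj u w → w = v) (hyu : y ≠ u) : Monitors G u y e := by
  intro p hp hlen
  obtain ⟨w, hadj, q, rfl⟩ := Walk.exists_eq_cons_of_ne hyu.symm p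
  obtain rfl := hleaf _ hadj
  have hle : G.dist u y ≤ G.dist u w + G.dist w y := huv.reachable.dist_triangle_left y
  rw [dist_eq_one_iff_adj.mpr huv] at hle
  have hq : q.length = G.dist w y := le_antisymm (by simp at hlen; omega) (dist_le q)
  exact List.mem_cons_of_mem _ (h q hp.of_cons hq)

lemma leaf_edge (hleaf : ∀ w, G.Adj u w → w = v) (hzu : z ≠ u) : Monitors G u z s(u, v) := by
  intro p _ _
  obtain ⟨w, hadj, q, rfl⟩ := Walk.exists_eq_cons_of_ne hzu.symm p
  obtain rfl := hleaf _ hadj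
  exact List.mem_cons_self

end Monitors

lemma exists_adj_ne_of_leaf [Fintype V] (hG : G.Connected) (hn : 3 ≤ Fintype.card V)
    (huv : G.Adj u v) (hleaf : ∀ w, G.Adj u w → w = v) : ∃ w, G.Adj v w ∧ w ≠ u := by
  classical
  have hcard : ({u, v} : Finset V).card < (Finset.univ : Finset V).card :=
    Finset.card_le_two.trans_lt (by rw [Finset.card_univ]; omega)
  obtain ⟨z, -, hz⟩ := Finset.exists_mem_notMem_of_card_lt_card hcard
  simp only [Finset.mem_insert, Finset.mem_singleton, not_or] at hz
  obtain ⟨p, hp⟩ := (hG.preconnected v z).exists_isPath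
  have hnil : ¬p.Nil := Walk.not_nil_of_ne (Ne.symm hz.2)
  refine ⟨p.snd, Walk.adj_snd hnil, fun hsnd ↦ ?_⟩
  have hu : u ∈ p.support := hsnd ▸ p.getVert_mem_support 1
  rcases hp.leaf_eq_start_or_end hleaf hu with h | h
  exacts [huv.ne h.symm, hz.1 h]

lemma IsMEGSet.exists_mem_ne_ne (hM : IsMEGSet G M) (huv : G.Adj u v) (hvw : G.Adj v w)
    (hwu : w ≠ u) : ∃ z ∈ M, z ≠ u ∧ z ≠ v := by
  obtain ⟨a, ha, b, hb, hab⟩ := hM s(v, w) hvw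
  -- otherwise `vw` would be monitored by `{u, v}`, which monitors only `uv`
  by_contra! hsub
  have hmem : ∀ c ∈ M, c = u ∨ c = v := fun c hc ↦ (em (c = u)).imp_right (hsub c hc)
  have hedge : s(a, b) = s(u, v) := by
    rcases hmem a ha with rfl | rfl <;> rcases hmem b hb with rfl | rfl
    exacts [(hab.not_self).elim, rfl, Sym2.eq_swap, (hab.not_self).elim]
  have hadj : G.Adj a b := by rw [← mem_edgeSet, hedge]; exact huv
  have hw : w ∈ s(u, v) := hedge ▸ hab.eq_of_adj hadj ▸ Sym2.mem_mk_right v w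
  rcases Sym2.mem_iff.mp hw with h | h
  exacts [hwu h, hvw.ne h.symm]

lemma exists_monitors_sdiff_of_monitors_leaf_neighbor (huv : G.Adj u v)
    (hleaf : ∀ w, G.Adj u w → w = v) (huM : u ∈ M) (hzM : z ∈ M) (hzu : z ≠ u)
    (hzv : z ≠ v) (hyM : y ∈ M) (h : Monitors G v y e) :
    ∃ a ∈ M \ {v}, ∃ b ∈ M \ {v}, Monitors G a b e := by
  have hyv : y ≠ v := by rintro rfl; exact h.not_self
  by_cases hyu : y = u
  · rw [hyu] at h
    obtain rfl := h.eq_of_adj huv.symm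
    refine ⟨u, ⟨huM, huv.ne⟩, z, ⟨hzM, hzv⟩, ?_⟩
    rw [Sym2.eq_swap]
    exact .leaf_edge hleaf hzu
  · exact ⟨u, ⟨huM, huv.ne⟩, y, ⟨hyM, hyv⟩, h.of_leaf_neighbor huv hleaf hyu⟩

end

theorem megSet_sdiff_support {V : Type*} [Fintype V] (G : SimpleGraph V)
    [DecidableRel G.Adj] (hG : G.Connected) (hn : 3 ≤ Fintype.card V)
    (u v : V) (hu : G.degree u = 1) (huv : G.Adj u v)
    (M : Set V) (hM : IsMEGSet G M) :
    IsMEGSet G (M \ {v}) := by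
  have hleaf : ∀ w, G.Adj u w → w = v := fun w hw ↦
    (degree_eq_one_iff_existsUnique_adj.mp hu).unique hw huv
  have huM : u ∈ M := by
    obtain ⟨x, hx, y, hy, hxy⟩ := hM s(u, v) huv
    rcases hxy.eq_or_eq_of_leaf_edge (hG.preconnected x y) hleaf with rfl | rfl <;> assumption
  obtain ⟨w, hvw, hwu⟩ := exists_adj_ne_of_leaf hG hn huv hleaf
  obtain ⟨z, hzM, hzu, hzv⟩ := hM.exists_mem_ne_ne huv hvw hwu
  intro e he
  obtain ⟨x, hx, y, hy, hxy⟩ := hM e he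
  by_cases hxv : x = v
  · exact exists_monitors_sdiff_of_monitors_leaf_neighbor huv hleaf huM hzM hzu hzv hy
      (hxv ▸ hxy)
  by_cases hyv : y = v
  · exact exists_monitors_sdiff_of_monitors_leaf_neighbor huv hleaf huM hzM hzu hzv hx
      (hyv ▸ hxy.symm)
  exact ⟨x, ⟨hx, hxv⟩, y, ⟨hy, hyv⟩, hxy⟩
end

section
/- If u has degree 1 in a connected graph G with unique neighbor v, and an edge e ≠ (u,v) is monitored by the pair {v,y} for some vertex y ≠ u, then e is also monitored by the pair {u,y}. -/
open SimpleGraph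

theorem monitors_of_pendant_transfer {V : Type*} [Fintype V]
    (G : SimpleGraph V) [DecidableRel G.Adj] (hG : G.Connected)
    (u v : V) (hu : G.degree u = 1) (huv : G.Adj u v)
    (y : V) (hy : y ≠ u) (e : Sym2 V) (he : e ∈ G.edgeSet) (hne : e ≠ s(u, v))
    (hmon : Monitors G v y e) :
    Monitors G u y e := by
  intro p hp hlen
  cases p with
  | nil => exact absurd rfl hy
  | @cons _ w _ h q =>
    -- w = v since u has degree 1
    have hwv : v = w := by
      obtain ⟨a, ha⟩ := Finset.card_eq_one.mp
        (show (G.neighborFinset u).card = 1 from hu)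
      have h1 : w ∈ G.neighborFinset u := by simpa using h
      have h2 : v ∈ G.neighborFinset u := by simpa using huv
      rw [ha, Finset.mem_singleton] at h1 h2
      rw [h1, h2]
    subst hwv
    have hq : q.IsPath := hp.of_cons
    have hd1 : G.dist v y ≤ q.length := SimpleGraph.dist_le q
    have hd2 : G.dist u y ≤ 1 + G.dist v y := by
      calc G.dist u y ≤ G.dist u v + G.dist v y := hG.dist_triangle
        _ ≤ 1 + G.dist v y := by
            have : G.dist u v ≤ 1 := by simpa using SimpleGraph.dist_le huv.toWalk
            omega
    have hlen' : q.length + 1 = G.dist u y := by simpa using hlen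
    have : q.length = G.dist v y := by omega
    have := hmon q hq this
    simp [SimpleGraph.Walk.edges_cons]
    right
    exact this
end
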